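/- arXiv:1811.10935 — 2 statements merged into one kernel-verified Lean document; each statement's English description precedes it below -/
import Mathlib

section
/- Let α > 0, K_α(r) = α r^(α-1), z : [0,∞) → ℝ continuous, and b : [0,∞) × ℝ → ℝ₊ continuous and Lipschitz in the second variable uniformly in t on compact time intervals. Then the Volterra integral equation y(t) = z(t) + ∫₀ᵗ K_α(t−s) b(s, y(s)) ds admits a unique continuous solution y on [0,∞). -/
/-!
Bielecki's weighted-norm argument. For `y, y' ∈ C([0,T])` the Picard map
`P y = z + ∫₀ᵗ K_α(t - s) b(s, y s) ds` satisfies, whenever `|y - y'| ≤ D e^{c s}`,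
`|P y - P y'|(t) ≤ L D e^{c t} ∫₀^∞ K_α(u) e^{-c u} du = Γ(α+1) c^{-α} L D e^{c t}`.
So for `c` large, `P` is a contraction for the sup norm weighted by `e^{-c t}`, and Banach's
fixed-point theorem gives a unique continuous solution on every `[0, T]`. By uniqueness the
solutions on `[0, n]` agree on overlaps and glue to the solution on `[0, ∞)`.
-/
open MeasureTheory Set Real Filter Topology
open scoped NNReal

noncomputable def powerKernelConv (α : ℝ) (g : ℝ → ℝ) (t : ℝ) : ℝ :=
  ∫ s in (0:ℝ)..t, α * (t - s) ^ (α - 1) * g s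

section PowerKernel

variable {α c t C T : ℝ} {g g₁ g₂ : ℝ → ℝ}

lemma intervalIntegrable_powerKernel (hα : 0 < α) (t : ℝ) :
    IntervalIntegrable (fun s => α * (t - s) ^ (α - 1)) volume 0 t := by
  have := (intervalIntegral.intervalIntegrable_rpow' (a := 0) (b := t) (r := α - 1)
    (by linarith)).comp_sub_left t
  simpa using this.symm.const_mul α

lemma intervalIntegrable_powerKernel_mul (hα : 0 < α) (ht : 0 ≤ t)
    (hg : ContinuousOn g (Icc 0 t)) :
    IntervalIntegrable (fun s => α * (t - s) ^ (α - 1) * g s) volume 0 t :=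
  (intervalIntegrable_powerKernel hα t).mul_continuousOn (by rwa [uIcc_of_le ht])

lemma powerKernelConv_congr (ht : 0 ≤ t) (h : EqOn g₁ g₂ (Icc 0 t)) :
    powerKernelConv α g₁ t = powerKernelConv α g₂ t :=
  intervalIntegral.integral_congr fun s hs => by
    rw [uIcc_of_le ht] at hs
    simp only [h hs]

lemma powerKernelConv_sub (hα : 0 < α) (ht : 0 ≤ t) (hg₁ : ContinuousOn g₁ (Icc 0 t))
    (hg₂ : ContinuousOn g₂ (Icc 0 t)) :
    powerKernelConv α g₁ t - powerKernelConv α g₂ t =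
      powerKernelConv α (fun s => g₁ s - g₂ s) t := by
  simp only [powerKernelConv, mul_sub]
  exact (intervalIntegral.integral_sub (intervalIntegrable_powerKernel_mul hα ht hg₁)
    (intervalIntegrable_powerKernel_mul hα ht hg₂)).symm

lemma integral_powerKernel_mul_exp_neg_le (hα : 0 < α) (hc : 0 < c) (ht : 0 ≤ t) :
    ∫ u in (0:ℝ)..t, α * u ^ (α - 1) * exp (-(c * u)) ≤ Gamma (α + 1) * c ^ (-α) := by
  have hint : IntegrableOn (fun u => u ^ (α - 1) * exp (-(c * u))) (Ioi 0) := by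
    simpa using integrableOn_rpow_mul_exp_neg_mul_rpow (p := 1) (by linarith) one_pos hc
  simp only [intervalIntegral.integral_of_le ht, mul_assoc, integral_const_mul]
  calc α * ∫ u in Ioc 0 t, u ^ (α - 1) * exp (-(c * u))
      ≤ α * ∫ u in Ioi 0, u ^ (α - 1) * exp (-(c * u)) := by
        gcongr
        · filter_upwards [ae_restrict_mem measurableSet_Ioi] with u hu
          exact mul_nonneg (rpow_nonneg hu.le _) (exp_pos _).le
        · exact Ioc_subset_Ioi_self
    _ = Gamma (α + 1) * c ^ (-α) := by
        rw [integral_rpow_mul_exp_neg_mul_Ioi hα hc, Gamma_add_one hα.ne', one_div,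
          inv_rpow hc.le, rpow_neg hc.le]
        ring

lemma abs_powerKernelConv_le (hα : 0 < α) (hc : 0 < c) (ht : 0 ≤ t)
    (hg : ∀ s ∈ Icc 0 t, |g s| ≤ C * exp (c * s)) :
    |powerKernelConv α g t| ≤ Gamma (α + 1) * c ^ (-α) * C * exp (c * t) := by
  have hC : 0 ≤ C := by simpa using (abs_nonneg _).trans (hg 0 ⟨le_rfl, ht⟩)
  have hshift : ∫ s in (0:ℝ)..t, α * (t - s) ^ (α - 1) * (C * exp (c * s)) =
      C * exp (c * t) * ∫ u in (0:ℝ)..t, α * u ^ (α - 1) * exp (-(c * u)) := by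
    have h := intervalIntegral.integral_comp_sub_left
      (fun u => α * u ^ (α - 1) * (C * exp (c * (t - u)))) t (a := 0) (b := t)
    simp only [sub_self, sub_zero, sub_sub_cancel] at h
    rw [h, ← intervalIntegral.integral_const_mul]
    refine intervalIntegral.integral_congr fun u _ => ?_
    simp only [mul_sub, exp_sub, exp_neg]
    field_simp
  calc |powerKernelConv α g t|
      ≤ ∫ s in (0:ℝ)..t, α * (t - s) ^ (α - 1) * (C * exp (c * s)) := by
        rw [← Real.norm_eq_abs, powerKernelConv]
        have hexp : ContinuousOn (fun s => C * exp (c * s)) (Icc 0 t) := by fun_prop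
        refine intervalIntegral.norm_integral_le_of_norm_le ht ?_
          (intervalIntegrable_powerKernel_mul hα ht hexp)
        filter_upwards with s hs
        rw [norm_mul, Real.norm_of_nonneg (by have := hs.2; positivity)]
        exact mul_le_mul_of_nonneg_left (hg s (Ioc_subset_Icc_self hs))
          (by have := hs.2; positivity)
    _ ≤ C * exp (c * t) * (Gamma (α + 1) * c ^ (-α)) := by
        rw [hshift]
        gcongr
        exact integral_powerKernel_mul_exp_neg_le hα hc ht
    _ = Gamma (α + 1) * c ^ (-α) * C * exp (c * t) := by ring

lemma powerKernelConv_eq_rpow_mul (hα : 0 < α) (ht : 0 ≤ t) :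
    powerKernelConv α g t = t ^ α * ∫ v in (0:ℝ)..1, α * (1 - v) ^ (α - 1) * g (t * v) := by
  rcases ht.eq_or_lt with rfl | ht
  · simp [powerKernelConv, zero_rpow hα.ne']
  have hscale := intervalIntegral.smul_integral_comp_mul_left
    (fun s => α * (t - s) ^ (α - 1) * g s) t (a := 0) (b := 1)
  rw [mul_zero, mul_one] at hscale
  rw [powerKernelConv, ← hscale, smul_eq_mul, ← intervalIntegral.integral_const_mul,
    ← intervalIntegral.integral_const_mul]
  refine intervalIntegral.integral_congr fun v hv => ?_
  rw [uIcc_of_le zero_le_one] at hv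
  have hsplit : t - t * v = t * (1 - v) := by ring
  simp only [hsplit, mul_rpow ht.le (sub_nonneg.2 hv.2), rpow_sub_one ht.ne']
  field_simp

lemma continuousOn_powerKernelConv (hα : 0 < α) (hg : ContinuousOn g (Icc 0 T)) :
    ContinuousOn (powerKernelConv α g) (Icc 0 T) := by
  have hmaps : ∀ t ∈ Icc 0 T, MapsTo (t * ·) (Icc 0 1) (Icc 0 T) := fun t ht v hv =>
    ⟨mul_nonneg ht.1 hv.1, (mul_le_of_le_one_right ht.1 hv.2).trans ht.2⟩
  obtain ⟨M, hM⟩ := isCompact_Icc.exists_bound_of_continuousOn hg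
  -- after `s = t v` the domain of integration no longer moves with `t`
  refine ContinuousOn.congr (fun t₀ ht₀ => ContinuousWithinAt.mul ?_ ?_)
    fun t ht => powerKernelConv_eq_rpow_mul hα ht.1
  · exact (continuousAt_id.rpow_const (Or.inr hα.le)).continuousWithinAt
  refine intervalIntegral.continuousWithinAt_of_dominated_interval
    (bound := fun v => α * (1 - v) ^ (α - 1) * M) ?_ ?_ ?_ ?_
  · filter_upwards [self_mem_nhdsWithin] with t ht
    refine (Measurable.aestronglyMeasurable (by fun_prop)).mul ?_
    rw [uIoc_of_le zero_le_one]
    exact (hg.comp (by fun_prop) ((hmaps t ht).mono_left Ioc_subset_Icc_self))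
      |>.aestronglyMeasurable measurableSet_Ioc
  · filter_upwards [self_mem_nhdsWithin] with t ht
    refine ae_of_all _ fun v hv => ?_
    rw [uIoc_of_le zero_le_one] at hv
    rw [norm_mul, Real.norm_of_nonneg (by have := hv.2; positivity)]
    exact mul_le_mul_of_nonneg_left (hM _ (hmaps t ht (Ioc_subset_Icc_self hv)))
      (by have := hv.2; positivity)
  · simpa using (intervalIntegrable_powerKernel hα 1).mul_const M
  · refine ae_of_all _ fun v hv => continuousWithinAt_const.mul ?_
    rw [uIoc_of_le zero_le_one] at hv
    exact (hg.comp (by fun_prop) fun t ht => hmaps t ht (Ioc_subset_Icc_self hv)) t₀ ht₀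

end PowerKernel

theorem existsUnique_isFixedPt_of_contractingWith_conj {X Y : Type*} [MetricSpace Y]
    [CompleteSpace Y] [Nonempty Y] (e : X ≃ Y) {P : X → X} {K : ℝ≥0}
    (hP : ContractingWith K (e ∘ P ∘ e.symm)) : ∃! x, Function.IsFixedPt P x := by
  have hconj : ∀ x, Function.IsFixedPt P x ↔ Function.IsFixedPt (e ∘ P ∘ e.symm) (e x) := by
    intro x
    simp only [Function.IsFixedPt, Function.comp_apply, Equiv.symm_apply_apply,
      e.apply_eq_iff_eq]
  refine ⟨e.symm (ContractingWith.fixedPoint _ hP), (hconj _).2 ?_, fun x hx => ?_⟩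
  · rw [e.apply_symm_apply]
    exact ContractingWith.fixedPoint_isFixedPt hP
  · rw [e.eq_symm_apply]
    exact ContractingWith.fixedPoint_unique hP ((hconj x).1 hx)

noncomputable def expMulEquiv {X : Type*} [TopologicalSpace X] (w : C(X, ℝ)) :
    C(X, ℝ) ≃ C(X, ℝ) where
  toFun f := ⟨fun x => exp (w x) * f x, by fun_prop⟩
  invFun f := ⟨fun x => exp (-w x) * f x, by fun_prop⟩
  left_inv f := by ext x; simp [← mul_assoc, ← exp_add]
  right_inv f := by ext x; simp [← mul_assoc, ← exp_add]

def IsVolterraSolutionOn (α : ℝ) (z : ℝ → ℝ) (b : ℝ → ℝ → ℝ) (S : Set ℝ) (y : ℝ → ℝ) : Prop :=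
  ContinuousOn y S ∧ ∀ t ∈ S, y t = z t + powerKernelConv α (fun s => b s (y s)) t

lemma IsVolterraSolutionOn.mono {α : ℝ} {z y : ℝ → ℝ} {b : ℝ → ℝ → ℝ} {S S' : Set ℝ}
    (h : IsVolterraSolutionOn α z b S y) (hS : S' ⊆ S) : IsVolterraSolutionOn α z b S' y :=
  ⟨h.1.mono hS, fun t ht => h.2 t (hS ht)⟩

lemma ContinuousOn.comp_id_prodMk {b : ℝ → ℝ → ℝ} {y : ℝ → ℝ} {S : Set ℝ}
    (hb : ContinuousOn (fun p : ℝ × ℝ => b p.1 p.2) (S ×ˢ univ)) (hy : ContinuousOn y S) :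
    ContinuousOn (fun s => b s (y s)) S :=
  hb.comp (continuousOn_id.prodMk hy) fun _ hs => ⟨hs, mem_univ _⟩

section Picard

variable {α T : ℝ} {z : ℝ → ℝ} {b : ℝ → ℝ → ℝ} (hα : 0 < α) (hT : 0 ≤ T)
  (hz : ContinuousOn z (Icc 0 T)) (hb : ContinuousOn (fun p : ℝ × ℝ => b p.1 p.2) (Icc 0 T ×ˢ univ))

noncomputable def picardMap (y : C(Icc 0 T, ℝ)) : C(Icc 0 T, ℝ) :=
  ⟨(Icc 0 T).domRestrict fun t => z t + powerKernelConv α (fun s => b s (IccExtend hT y s)) t,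
    (hz.add (continuousOn_powerKernelConv hα
      (hb.comp_id_prodMk (continuous_IccExtend_iff.2 y.2).continuousOn))).domRestrict⟩

lemma picardMap_apply (y : C(Icc 0 T, ℝ)) (t : Icc 0 T) :
    picardMap hα hT hz hb y t = z t + powerKernelConv α (fun s => b s (IccExtend hT y s)) t :=
  rfl

lemma isVolterraSolutionOn_IccExtend_of_isFixedPt {y : C(Icc 0 T, ℝ)}
    (hy : Function.IsFixedPt (picardMap hα hT hz hb) y) :
    IsVolterraSolutionOn α z b (Icc 0 T) (IccExtend hT y) :=
  ⟨(continuous_IccExtend_iff.2 y.2).continuousOn, fun t ht =>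
    (IccExtend_of_mem hT y ht).trans (DFunLike.congr_fun hy ⟨t, ht⟩).symm⟩

lemma IsVolterraSolutionOn.isFixedPt_picardMap {y : ℝ → ℝ}
    (h : IsVolterraSolutionOn α z b (Icc 0 T) y) :
    Function.IsFixedPt (picardMap hα hT hz hb) ⟨(Icc 0 T).domRestrict y, h.1.domRestrict⟩ := by
  ext ⟨t, ht⟩
  rw [picardMap_apply, ContinuousMap.coe_mk, domRestrict_apply, h.2 t ht]
  congr 1
  refine powerKernelConv_congr ht.1 fun s hs => ?_
  rw [IccExtend_of_mem hT _ ⟨hs.1, hs.2.trans ht.2⟩]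
  rfl

variable {L : ℝ≥0} (hL : ∀ t ∈ Icc 0 T, LipschitzWith L (b t))
include hL

lemma abs_picardMap_sub_le {c D : ℝ} (hc : 0 < c) {y y' : C(Icc 0 T, ℝ)}
    (hD : ∀ t, |y t - y' t| ≤ D * exp (c * t)) (t : Icc 0 T) :
    |picardMap hα hT hz hb y t - picardMap hα hT hz hb y' t| ≤
      Gamma (α + 1) * c ^ (-α) * (L * D) * exp (c * t) := by
  have hcont : ∀ y : C(Icc 0 T, ℝ), ContinuousOn (fun s => b s (IccExtend hT y s)) (Icc 0 t) :=
    fun y => (hb.comp_id_prodMk (continuous_IccExtend_iff.2 y.2).continuousOn).mono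
      (Icc_subset_Icc_right t.2.2)
  rw [picardMap_apply, picardMap_apply, add_sub_add_left_eq_sub,
    powerKernelConv_sub hα t.2.1 (hcont y) (hcont y')]
  refine abs_powerKernelConv_le hα hc t.2.1 fun s hs => ?_
  have hsT : s ∈ Icc 0 T := ⟨hs.1, hs.2.trans t.2.2⟩
  calc |b s (IccExtend hT y s) - b s (IccExtend hT y' s)|
      ≤ L * |IccExtend hT y s - IccExtend hT y' s| := (hL s hsT).dist_le_mul _ _
    _ = L * |y ⟨s, hsT⟩ - y' ⟨s, hsT⟩| := by
      rw [IccExtend_of_mem hT y hsT, IccExtend_of_mem hT y' hsT]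
    _ ≤ L * (D * exp (c * s)) := by gcongr; exact hD _
    _ = L * D * exp (c * s) := by ring

lemma contractingWith_picardMap_conj {c : ℝ} (hc : 0 < c)
    (hcL : Gamma (α + 1) * c ^ (-α) * L ≤ 2⁻¹) :
    ContractingWith 2⁻¹ (expMulEquiv ⟨fun t : Icc 0 T => -(c * t), by fun_prop⟩ ∘
      picardMap hα hT hz hb ∘ (expMulEquiv ⟨fun t : Icc 0 T => -(c * t), by fun_prop⟩).symm) := by
  set e := expMulEquiv ⟨fun t : Icc 0 T => -(c * t), by fun_prop⟩
  have he : ∀ f t, e f t = exp (-(c * t)) * f t := fun _ _ => rfl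
  have he_symm : ∀ f t, e.symm f t = exp (c * t) * f t := fun _ _ => by
    simp [e, expMulEquiv]
  refine ⟨by norm_num, LipschitzWith.of_dist_le_mul fun f f' => ?_⟩
  rw [ContinuousMap.dist_le (by positivity)]
  intro t
  have hD : ∀ s, |e.symm f s - e.symm f' s| ≤ dist f f' * exp (c * s) := by
    intro s
    rw [he_symm, he_symm, ← mul_sub, abs_mul, abs_exp, mul_comm]
    gcongr
    rw [← Real.dist_eq]
    exact ContinuousMap.dist_apply_le_dist s
  calc dist ((e ∘ picardMap hα hT hz hb ∘ e.symm) f t)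
        ((e ∘ picardMap hα hT hz hb ∘ e.symm) f' t)
      = exp (-(c * t)) *
        |picardMap hα hT hz hb (e.symm f) t - picardMap hα hT hz hb (e.symm f') t| := by
        simp only [Function.comp_apply, he, Real.dist_eq, ← mul_sub, abs_mul, abs_exp]
    _ ≤ exp (-(c * t)) * (Gamma (α + 1) * c ^ (-α) * (L * dist f f') * exp (c * t)) := by
        gcongr
        exact abs_picardMap_sub_le hα hT hz hb hL hc hD t
    _ = Gamma (α + 1) * c ^ (-α) * L * dist f f' := by
        rw [exp_neg]
        field_simp
    _ ≤ ((2⁻¹ : ℝ≥0) : ℝ) * dist f f' := by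
        push_cast
        gcongr

theorem existsUnique_isFixedPt_picardMap :
    ∃! y, Function.IsFixedPt (picardMap hα hT hz hb) y := by
  have hsmall : Tendsto (fun c => Gamma (α + 1) * c ^ (-α) * L) atTop (𝓝 0) := by
    simpa using ((tendsto_rpow_neg_atTop hα).const_mul (Gamma (α + 1))).mul_const (L : ℝ)
  obtain ⟨c, hcL, hc⟩ :=
    ((hsmall.eventually_le_const (by norm_num : (0:ℝ) < 2⁻¹)).and (eventually_gt_atTop 0)).exists
  exact existsUnique_isFixedPt_of_contractingWith_conj _
    (contractingWith_picardMap_conj hα hT hz hb hL hc hcL)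

end Picard

section Solutions

variable {α : ℝ} {z : ℝ → ℝ} {b : ℝ → ℝ → ℝ} (hα : 0 < α)
include hα

theorem exists_isVolterraSolutionOn_Icc {T : ℝ} {L : ℝ≥0} (hT : 0 ≤ T)
    (hz : ContinuousOn z (Icc 0 T))
    (hb : ContinuousOn (fun p : ℝ × ℝ => b p.1 p.2) (Icc 0 T ×ˢ univ))
    (hL : ∀ t ∈ Icc 0 T, LipschitzWith L (b t)) :
    ∃ y, IsVolterraSolutionOn α z b (Icc 0 T) y :=
  let ⟨y, hy, _⟩ := existsUnique_isFixedPt_picardMap hα hT hz hb hL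
  ⟨IccExtend hT y, isVolterraSolutionOn_IccExtend_of_isFixedPt hα hT hz hb hy⟩

theorem IsVolterraSolutionOn.eqOn_Icc {T : ℝ} {L : ℝ≥0} {y₁ y₂ : ℝ → ℝ}
    (hz : ContinuousOn z (Icc 0 T))
    (hb : ContinuousOn (fun p : ℝ × ℝ => b p.1 p.2) (Icc 0 T ×ˢ univ))
    (hL : ∀ t ∈ Icc 0 T, LipschitzWith L (b t))
    (h₁ : IsVolterraSolutionOn α z b (Icc 0 T) y₁) (h₂ : IsVolterraSolutionOn α z b (Icc 0 T) y₂) :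
    EqOn y₁ y₂ (Icc 0 T) := fun t ht =>
  have hT : 0 ≤ T := ht.1.trans ht.2
  DFunLike.congr_fun ((existsUnique_isFixedPt_picardMap hα hT hz hb hL).unique
    (h₁.isFixedPt_picardMap hα hT hz hb) (h₂.isFixedPt_picardMap hα hT hz hb)) ⟨t, ht⟩

variable (hz : ContinuousOn z (Ici 0))
  (hb : ContinuousOn (fun p : ℝ × ℝ => b p.1 p.2) (Ici 0 ×ˢ univ))
  (hL : ∀ T, ∃ L : ℝ≥0, ∀ t ∈ Icc 0 T, LipschitzWith L (b t))
include hz hb hL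

theorem IsVolterraSolutionOn.eqOn_Ici {y₁ y₂ : ℝ → ℝ}
    (h₁ : IsVolterraSolutionOn α z b (Ici 0) y₁) (h₂ : IsVolterraSolutionOn α z b (Ici 0) y₂) :
    EqOn y₁ y₂ (Ici 0) := fun t ht =>
  have ⟨_, hLt⟩ := hL t
  (h₁.mono Icc_subset_Ici_self).eqOn_Icc hα (hz.mono Icc_subset_Ici_self)
    (hb.mono (prod_mono Icc_subset_Ici_self subset_rfl)) hLt (h₂.mono Icc_subset_Ici_self)
    ⟨ht, le_rfl⟩

theorem exists_isVolterraSolutionOn_Ici : ∃ y, IsVolterraSolutionOn α z b (Ici 0) y := by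
  have hzT (T : ℝ) : ContinuousOn z (Icc 0 T) := hz.mono Icc_subset_Ici_self
  have hbT (T : ℝ) : ContinuousOn (fun p : ℝ × ℝ => b p.1 p.2) (Icc 0 T ×ˢ univ) :=
    hb.mono (prod_mono Icc_subset_Ici_self subset_rfl)
  choose L hL using hL
  choose sol hsol using fun n : ℕ =>
    exists_isVolterraSolutionOn_Icc hα n.cast_nonneg (hzT n) (hbT n) (hL n)
  have hagree (n : ℕ) : EqOn (fun t => sol ⌈t⌉₊ t) (sol n) (Icc 0 n) := fun t ht =>
    ((hsol _).eqOn_Icc hα (hzT _) (hbT _) (hL _)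
      ((hsol n).mono (Icc_subset_Icc_right (by exact_mod_cast Nat.ceil_le.2 ht.2))))
      ⟨ht.1, Nat.le_ceil t⟩
  refine ⟨fun t => sol ⌈t⌉₊ t, fun t ht => ?_, fun t ht => ?_⟩
  · obtain ⟨n, hn⟩ := exists_nat_gt t
    refine ((hsol n).1.congr (hagree n)).continuousWithinAt ⟨ht, hn.le⟩
      |>.mono_of_mem_nhdsWithin ?_
    rw [← Ici_inter_Iic]
    exact inter_mem_nhdsWithin _ (Iic_mem_nhds hn)
  · dsimp only
    rw [(hsol _).2 t ⟨ht, Nat.le_ceil t⟩]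
    congr 1
    exact powerKernelConv_congr ht fun s hs =>
      congrArg (b s) (hagree _ ⟨hs.1, hs.2.trans (Nat.le_ceil t)⟩).symm

end Solutions

theorem volterra_exists_unique_general
    (α : ℝ) (hα : 0 < α)
    (z : ℝ → ℝ) (hz : ContinuousOn z (Ici 0))
    (b : ℝ → ℝ → ℝ)
    (hb_cont : ContinuousOn (fun p : ℝ × ℝ => b p.1 p.2) (Ici 0 ×ˢ univ))
    (hb_lip : ∀ T > 0, ∃ L : ℝ, ∀ t ∈ Icc (0:ℝ) T, ∀ x x' : ℝ,
      |b t x - b t x'| ≤ L * |x - x'|) :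
    ∃ y : ℝ → ℝ, (ContinuousOn y (Ici 0) ∧
        ∀ t ≥ (0:ℝ), y t = z t + ∫ s in (0:ℝ)..t, α * (t - s) ^ (α - 1) * b s (y s)) ∧
      ∀ y' : ℝ → ℝ, (ContinuousOn y' (Ici 0) ∧
          ∀ t ≥ (0:ℝ), y' t = z t + ∫ s in (0:ℝ)..t, α * (t - s) ^ (α - 1) * b s (y' s)) →
        ∀ t ≥ (0:ℝ), y' t = y t := by
  have hlip (T : ℝ) : ∃ L : ℝ≥0, ∀ t ∈ Icc 0 T, LipschitzWith L (b t) := by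
    obtain ⟨L, hL⟩ := hb_lip (max T 1) (by positivity)
    exact ⟨L.toNNReal, fun t ht => LipschitzWith.of_dist_le' fun x x' =>
      hL t ⟨ht.1, ht.2.trans (le_max_left _ _)⟩ x x'⟩
  obtain ⟨y, hy⟩ := exists_isVolterraSolutionOn_Ici hα hz hb_cont hlip
  exact ⟨y, hy, fun y' hy' => IsVolterraSolutionOn.eqOn_Ici hα hz hb_cont hlip hy' hy⟩

/-- **Existence and uniqueness for the Volterra integral equation**
`y(t) = z(t) + ∫₀ᵗ α (t-s)^(α-1) b(s, y(s)) ds` on `[0,∞)`, where `b` is continuous,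
nonnegative, and Lipschitz in its second variable uniformly in `t` on compact
time intervals. -/
theorem volterra_exists_unique
    (α : ℝ) (hα : 0 < α)
    (z : ℝ → ℝ) (hz : ContinuousOn z (Ici 0))
    (b : ℝ → ℝ → ℝ)
    (hb_cont : ContinuousOn (fun p : ℝ × ℝ => b p.1 p.2) (Ici 0 ×ˢ univ))
    (hb_nonneg : ∀ t x, 0 ≤ t → 0 ≤ b t x)
    (hb_lip : ∀ T > 0, ∃ L : ℝ, ∀ t ∈ Icc (0:ℝ) T, ∀ x x' : ℝ,
      |b t x - b t x'| ≤ L * |x - x'|) :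
    ∃ y : ℝ → ℝ, (ContinuousOn y (Ici 0) ∧
        ∀ t ≥ (0:ℝ), y t = z t + ∫ s in (0:ℝ)..t, α * (t - s) ^ (α - 1) * b s (y s)) ∧
      ∀ y' : ℝ → ℝ, (ContinuousOn y' (Ici 0) ∧
          ∀ t ≥ (0:ℝ), y' t = z t + ∫ s in (0:ℝ)..t, α * (t - s) ^ (α - 1) * b s (y' s)) →
        ∀ t ≥ (0:ℝ), y' t = y t :=
  volterra_exists_unique_general α hα z hz b hb_cont hb_lip
end

section
/- Let α > 0, K_α(r) = α r^(α−1), z continuous, and b : [0,∞) × ℝ → ℝ₊ continuous, nondecreasing in x, and locally Lipschitz in x uniformly in t on compact intervals. If y is the maximal continuous solution of y(t) = z(t) + ∫₀ᵗ K_α(t−s) b(s,y(s)) ds on [0,T∞), and u : [0,T] → ℝ (T < T∞) is continuous with u(t) ≤ z(t) + ∫₀ᵗ K_α(t−s) b(s,u(s)) ds for all t ∈ [0,T], then u(t) ≤ y(t) for all t ∈ [0,T]. -/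
/-!
The positive part `w = (u - y)⁺` of the difference between the subsolution and the solution
satisfies `w(t) ≤ L ∫₀ᵗ K_α(t - s) w(s) ds`: where `u ≤ y` monotonicity of `b` makes the
integrand nonpositive, and elsewhere `b` is `L`-Lipschitz on the (compact) range of `u` and `y`.
If `w` vanishes on `[0, a]` and `L δ^α ≤ 1/2`, the maximum `M` of `w` on `[a, a + δ]` satisfies
`M ≤ L M δ^α ≤ M / 2`, so `w` vanishes on `[0, a + δ]`; stepping by `δ` covers `[0, T]`.
-/

open MeasureTheory Set Filter Topology

section RpowKernel

variable {α : ℝ}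

lemma rpow_kernel_nonneg (hα : 0 ≤ α) {s t : ℝ} (hst : s ≤ t) : 0 ≤ α * (t - s) ^ (α - 1) :=
  mul_nonneg hα (Real.rpow_nonneg (sub_nonneg.2 hst) _)

lemma intervalIntegrable_rpow_kernel_mul (hα : 0 < α) (t : ℝ) {a c : ℝ} (hac : a ≤ c)
    {g : ℝ → ℝ} (hg : ContinuousOn g (Icc a c)) :
    IntervalIntegrable (fun s => α * (t - s) ^ (α - 1) * g s) volume a c := by
  have hpow : IntervalIntegrable (fun x : ℝ => x ^ (α - 1)) volume (t - a) (t - c) :=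
    intervalIntegral.intervalIntegrable_rpow' (by linarith)
  have hker : IntervalIntegrable (fun s : ℝ => (t - s) ^ (α - 1)) volume a c := by
    simpa using hpow.comp_sub_left t
  exact (hker.const_mul α).mul_continuousOn (by rwa [uIcc_of_le hac])

lemma integral_rpow_kernel (hα : 0 < α) (a t : ℝ) :
    ∫ s in a..t, α * (t - s) ^ (α - 1) = (t - a) ^ α := by
  rw [intervalIntegral.integral_const_mul, intervalIntegral.integral_comp_sub_left
    (fun x => x ^ (α - 1)) t, sub_self, integral_rpow (Or.inl (by linarith)), sub_add_cancel,
    Real.zero_rpow hα.ne', sub_zero]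
  field_simp

lemma integral_rpow_kernel_mul_nonneg (hα : 0 < α) {a t : ℝ} (hat : a ≤ t) {g : ℝ → ℝ}
    (hg : ∀ s ∈ Icc a t, 0 ≤ g s) : 0 ≤ ∫ s in a..t, α * (t - s) ^ (α - 1) * g s :=
  intervalIntegral.integral_nonneg hat fun s hs =>
    mul_nonneg (rpow_kernel_nonneg hα.le hs.2) (hg s hs)

lemma integral_rpow_kernel_mul_mono_on (hα : 0 < α) {a t : ℝ} (hat : a ≤ t) {f g : ℝ → ℝ}
    (hf : ContinuousOn f (Icc a t)) (hg : ContinuousOn g (Icc a t))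
    (hfg : ∀ s ∈ Icc a t, f s ≤ g s) :
    ∫ s in a..t, α * (t - s) ^ (α - 1) * f s ≤ ∫ s in a..t, α * (t - s) ^ (α - 1) * g s :=
  intervalIntegral.integral_mono_on hat (intervalIntegrable_rpow_kernel_mul hα t hat hf)
    (intervalIntegrable_rpow_kernel_mul hα t hat hg) fun s hs =>
      mul_le_mul_of_nonneg_left (hfg s hs) (rpow_kernel_nonneg hα.le hs.2)

lemma integral_rpow_kernel_mul_le_add_const_mul (hα : 0 < α) {a t : ℝ} (hat : a ≤ t)
    {f g w : ℝ → ℝ} (hf : ContinuousOn f (Icc a t)) (hg : ContinuousOn g (Icc a t))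
    (hw : ContinuousOn w (Icc a t)) {L : ℝ} (hfgw : ∀ s ∈ Icc a t, f s ≤ g s + L * w s) :
    ∫ s in a..t, α * (t - s) ^ (α - 1) * f s ≤
      (∫ s in a..t, α * (t - s) ^ (α - 1) * g s) +
        L * ∫ s in a..t, α * (t - s) ^ (α - 1) * w s := by
  have hmono := integral_rpow_kernel_mul_mono_on hα hat hf
    (hg.add (continuousOn_const.mul hw)) hfgw
  simp only [Pi.add_apply, Pi.mul_apply, mul_add, mul_left_comm _ L] at hmono
  rwa [intervalIntegral.integral_add (intervalIntegrable_rpow_kernel_mul hα t hat hg)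
    ((intervalIntegrable_rpow_kernel_mul hα t hat hw).const_mul L),
    intervalIntegral.integral_const_mul] at hmono

lemma exists_pos_mul_rpow_lt (hα : 0 < α) (L : ℝ) {ε : ℝ} (hε : 0 < ε) :
    ∃ δ > 0, L * δ ^ α < ε := by
  have hlim : Tendsto (fun δ : ℝ => L * δ ^ α) (𝓝[>] 0) (𝓝 0) := by
    simpa [Real.zero_rpow hα.ne'] using
      ((Real.continuousAt_rpow_const 0 α (Or.inr hα.le)).tendsto.const_mul L).mono_left
        nhdsWithin_le_nhds
  obtain ⟨δ, hδε, hδ⟩ := ((hlim.eventually (gt_mem_nhds hε)).and self_mem_nhdsWithin).exists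
  exact ⟨δ, hδ, hδε⟩

end RpowKernel

section Gronwall

variable {α L T : ℝ} {φ : ℝ → ℝ}

lemma eq_zero_on_short_interval_of_le_integral_rpow_kernel (hα : 0 < α) (hL : 0 ≤ L)
    (hφc : ContinuousOn φ (Icc 0 T)) (hφ0 : ∀ t ∈ Icc 0 T, 0 ≤ φ t)
    (hφ : ∀ t ∈ Icc 0 T, φ t ≤ L * ∫ s in (0:ℝ)..t, α * (t - s) ^ (α - 1) * φ s)
    {a c : ℝ} (ha : 0 ≤ a) (hac : a ≤ c) (hcT : c ≤ T) (hsmall : L * (c - a) ^ α ≤ 1 / 2)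
    (hzero : ∀ s ∈ Icc 0 a, φ s = 0) : ∀ s ∈ Icc a c, φ s = 0 := by
  have hsub : Icc a c ⊆ Icc 0 T := Icc_subset_Icc ha hcT
  obtain ⟨m, hm, hmax⟩ := isCompact_Icc.exists_isMaxOn (nonempty_Icc.2 hac) (hφc.mono hsub)
  have hm0 : 0 ≤ φ m := hφ0 m (hsub hm)
  have hhalf : ∀ t ∈ Icc a c, φ t ≤ φ m / 2 := by
    intro t ht
    have hφat : ContinuousOn φ (Icc a t) := hφc.mono (Icc_subset_Icc ha (ht.2.trans hcT))
    have hsplit : ∫ s in (0:ℝ)..t, α * (t - s) ^ (α - 1) * φ s =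
        ∫ s in a..t, α * (t - s) ^ (α - 1) * φ s := by
      have hinit : ∫ s in (0:ℝ)..a, α * (t - s) ^ (α - 1) * φ s = 0 := by
        rw [intervalIntegral.integral_congr (g := fun _ => 0) fun s hs => by
          simp [hzero s (by rwa [uIcc_of_le ha] at hs)]]
        simp
      rw [← intervalIntegral.integral_add_adjacent_intervals
        (intervalIntegrable_rpow_kernel_mul hα t ha (hφc.mono (Icc_subset_Icc_right
          (hac.trans hcT))))
        (intervalIntegrable_rpow_kernel_mul hα t ht.1 hφat), hinit, zero_add]
    have hbound : ∫ s in a..t, α * (t - s) ^ (α - 1) * φ s ≤ (t - a) ^ α * φ m := by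
      calc _ ≤ ∫ s in a..t, α * (t - s) ^ (α - 1) * φ m :=
            integral_rpow_kernel_mul_mono_on hα ht.1 hφat continuousOn_const fun s hs =>
              hmax (Icc_subset_Icc_right ht.2 hs)
        _ = (t - a) ^ α * φ m := by
          rw [intervalIntegral.integral_mul_const, integral_rpow_kernel hα a t]
    have hpow : (t - a) ^ α ≤ (c - a) ^ α :=
      Real.rpow_le_rpow (sub_nonneg.2 ht.1) (by linarith [ht.2]) hα.le
    calc φ t ≤ L * ∫ s in a..t, α * (t - s) ^ (α - 1) * φ s := hsplit ▸ hφ t (hsub ht)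
      _ ≤ L * ((c - a) ^ α * φ m) :=
          mul_le_mul_of_nonneg_left (hbound.trans (by gcongr)) hL
      _ ≤ φ m / 2 := by nlinarith
  have hm_nonpos : φ m ≤ 0 := by linarith [hhalf m hm]
  exact fun s hs => le_antisymm ((hmax hs).trans hm_nonpos) (hφ0 s (hsub hs))

theorem eq_zero_of_le_integral_rpow_kernel (hα : 0 < α) (hL : 0 ≤ L)
    (hφc : ContinuousOn φ (Icc 0 T)) (hφ0 : ∀ t ∈ Icc 0 T, 0 ≤ φ t)
    (hφ : ∀ t ∈ Icc 0 T, φ t ≤ L * ∫ s in (0:ℝ)..t, α * (t - s) ^ (α - 1) * φ s) :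
    ∀ t ∈ Icc 0 T, φ t = 0 := by
  obtain ⟨δ, hδ, hLδ⟩ := exists_pos_mul_rpow_lt hα L one_half_pos
  have hstep : ∀ n : ℕ, ∀ t ∈ Icc 0 T, t ≤ n * δ → φ t = 0 := by
    intro n
    induction n with
    | zero =>
      intro t ht htn
      obtain rfl : t = 0 := le_antisymm (by simpa using htn) ht.1
      exact le_antisymm (by simpa using hφ 0 ht) (hφ0 0 ht)
    | succ n ih =>
      intro t ht htn
      rcases le_or_gt t (n * δ) with hle | hlt
      · exact ih t ht hle
      · have hsmall : L * (t - n * δ) ^ α ≤ 1 / 2 := by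
          push_cast at htn
          calc L * (t - n * δ) ^ α ≤ L * δ ^ α :=
                mul_le_mul_of_nonneg_left
                  (Real.rpow_le_rpow (sub_nonneg.2 hlt.le) (by linarith) hα.le) hL
            _ ≤ 1 / 2 := hLδ.le
        exact eq_zero_on_short_interval_of_le_integral_rpow_kernel hα hL hφc hφ0 hφ
          (by positivity) hlt.le ht.2 hsmall
          (fun s hs => ih s ⟨hs.1, hs.2.trans (hlt.le.trans ht.2)⟩ hs.2) t ⟨hlt.le, le_rfl⟩
  intro t ht
  obtain ⟨n, hn⟩ := exists_nat_ge (t / δ)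
  exact hstep n t ht (by rwa [div_le_iff₀ hδ] at hn)

end Gronwall

lemma sub_le_mul_max_sub_zero_of_monotone {f : ℝ → ℝ} (hf : Monotone f) {L : ℝ}
    {x x' : ℝ} (hlip : |f x - f x'| ≤ L * |x - x'|) : f x - f x' ≤ L * max (x - x') 0 := by
  rcases le_or_gt x x' with hle | hlt
  · simpa [max_eq_right (sub_nonpos.2 hle)] using hf hle
  · rw [max_eq_left (sub_nonneg.2 hlt.le), ← abs_of_pos (sub_pos.2 hlt)]
    exact (le_abs_self _).trans hlip

lemma exists_sub_le_mul_max_sub_zero {b : ℝ → ℝ → ℝ} (hb_mono : ∀ t ≥ (0:ℝ), Monotone (b t))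
    (hb_lip : ∀ T > 0, ∀ R > 0, ∃ L : ℝ, ∀ t ∈ Icc (0:ℝ) T, ∀ x ∈ Icc (-R) R,
      ∀ x' ∈ Icc (-R) R, |b t x - b t x'| ≤ L * |x - x'|)
    {T : ℝ} {u y : ℝ → ℝ} (hu : ContinuousOn u (Icc 0 T)) (hy : ContinuousOn y (Icc 0 T)) :
    ∃ L ≥ 0, ∀ s ∈ Icc 0 T, b s (u s) - b s (y s) ≤ L * max (u s - y s) 0 := by
  obtain ⟨C, hC⟩ := isCompact_Icc.exists_bound_of_continuousOn (hu.prodMk hy)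
  have hmem : ∀ v : ℝ, |v| ≤ C → v ∈ Icc (-max C 1) (max C 1) := fun v hv =>
    abs_le.1 (hv.trans (le_max_left C 1))
  obtain ⟨L, hL⟩ := hb_lip (|T| + 1) (by positivity) (max C 1) (by positivity)
  refine ⟨max L 0, le_max_right L 0, fun s hs => ?_⟩
  have hs' : s ∈ Icc 0 (|T| + 1) := ⟨hs.1, by linarith [hs.2, le_abs_self T]⟩
  refine sub_le_mul_max_sub_zero_of_monotone (hb_mono s hs.1) ?_
  calc |b s (u s) - b s (y s)| ≤ L * |u s - y s| :=
        hL s hs' _ (hmem _ ((norm_fst_le _).trans (hC s hs)))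
          _ (hmem _ ((norm_snd_le _).trans (hC s hs)))
    _ ≤ max L 0 * |u s - y s| := by gcongr; exact le_max_left L 0

theorem volterra_comparison_general
    (α : ℝ) (hα : 0 < α)
    (z : ℝ → ℝ)
    (b : ℝ → ℝ → ℝ)
    (hb_cont : ContinuousOn (fun p : ℝ × ℝ => b p.1 p.2) (Ici 0 ×ˢ univ))
    (hb_mono : ∀ t ≥ (0:ℝ), Monotone (b t))
    (hb_lip : ∀ T > 0, ∀ R > 0, ∃ L : ℝ, ∀ t ∈ Icc (0:ℝ) T, ∀ x ∈ Icc (-R) R, ∀ x' ∈ Icc (-R) R,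
      |b t x - b t x'| ≤ L * |x - x'|)
    (Tinf : ENNReal) (y : ℝ → ℝ)
    -- `y` is a continuous solution on `[0, T∞)`
    (hy_cont : ∀ t : ℝ, 0 ≤ t → ENNReal.ofReal t < Tinf → ContinuousOn y (Icc 0 t))
    (hy_sol : ∀ t : ℝ, 0 ≤ t → ENNReal.ofReal t < Tinf →
      y t = z t + ∫ s in (0:ℝ)..t, α * (t - s) ^ (α - 1) * b s (y s))
    (T : ℝ) (hT : 0 ≤ T) (hTlt : ENNReal.ofReal T < Tinf)
    (u : ℝ → ℝ) (hu_cont : ContinuousOn u (Icc 0 T))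
    (hu_sub : ∀ t ∈ Icc (0:ℝ) T,
      u t ≤ z t + ∫ s in (0:ℝ)..t, α * (t - s) ^ (α - 1) * b s (u s)) :
    ∀ t ∈ Icc (0:ℝ) T, u t ≤ y t := by
  have hy_contT : ContinuousOn y (Icc 0 T) := hy_cont T hT hTlt
  have hb_comp : ∀ f : ℝ → ℝ, ContinuousOn f (Icc 0 T) →
      ContinuousOn (fun s => b s (f s)) (Icc 0 T) := fun f hf =>
    hb_cont.comp (continuousOn_id.prodMk hf) fun s hs => ⟨hs.1, trivial⟩
  obtain ⟨L, hL, hbL⟩ := exists_sub_le_mul_max_sub_zero hb_mono hb_lip hu_cont hy_contT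
  have hw_cont : ContinuousOn (fun s => max (u s - y s) 0) (Icc 0 T) :=
    ContinuousOn.sup (hu_cont.sub hy_contT) continuousOn_const
  have hw : ∀ t ∈ Icc 0 T, max (u t - y t) 0 ≤
      L * ∫ s in (0:ℝ)..t, α * (t - s) ^ (α - 1) * max (u s - y s) 0 := by
    intro t ht
    have hsub : Icc 0 t ⊆ Icc 0 T := Icc_subset_Icc_right ht.2
    have hint := integral_rpow_kernel_mul_le_add_const_mul hα ht.1
      ((hb_comp u hu_cont).mono hsub) ((hb_comp y hy_contT).mono hsub) (hw_cont.mono hsub)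
      fun s hs => by linarith [hbL s (hsub hs)]
    have hy_t := hy_sol t ht.1 ((ENNReal.ofReal_le_ofReal ht.2).trans_lt hTlt)
    exact max_le (by linarith [hu_sub t ht]) (mul_nonneg hL
      (integral_rpow_kernel_mul_nonneg hα ht.1 fun s _ => le_max_right _ _))
  intro t ht
  have := eq_zero_of_le_integral_rpow_kernel hα hL hw_cont (fun _ _ => le_max_right _ _) hw t ht
  linarith [le_max_left (u t - y t) 0]

/-- **Comparison principle for Volterra integral equations.**
If `y` is the maximal continuous solution of
`y(t) = z(t) + ∫₀ᵗ α (t-s)^(α-1) b(s, y(s)) ds` on `[0, T∞)` (blowing up at `T∞` if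
`T∞ < ∞`), and `u` is a continuous subsolution on `[0,T]` with `T < T∞`, then `u ≤ y`
on `[0,T]`. -/
theorem volterra_comparison
    (α : ℝ) (hα : 0 < α)
    (z : ℝ → ℝ) (hz : ContinuousOn z (Ici 0))
    (b : ℝ → ℝ → ℝ)
    (hb_cont : ContinuousOn (fun p : ℝ × ℝ => b p.1 p.2) (Ici 0 ×ˢ univ))
    (hb_nonneg : ∀ t x, 0 ≤ t → 0 ≤ b t x)
    (hb_mono : ∀ t ≥ (0:ℝ), Monotone (b t))
    (hb_lip : ∀ T > 0, ∀ R > 0, ∃ L : ℝ, ∀ t ∈ Icc (0:ℝ) T, ∀ x ∈ Icc (-R) R, ∀ x' ∈ Icc (-R) R,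
      |b t x - b t x'| ≤ L * |x - x'|)
    (Tinf : ENNReal) (y : ℝ → ℝ)
    -- `y` is a continuous solution on `[0, T∞)`
    (hy_cont : ∀ t : ℝ, 0 ≤ t → ENNReal.ofReal t < Tinf → ContinuousOn y (Icc 0 t))
    (hy_sol : ∀ t : ℝ, 0 ≤ t → ENNReal.ofReal t < Tinf →
      y t = z t + ∫ s in (0:ℝ)..t, α * (t - s) ^ (α - 1) * b s (y s))
    -- blow-up at `T∞` when `T∞ < ∞` (maximality)
    (hy_blowup : Tinf ≠ ⊤ →
      Tendsto y (nhdsWithin Tinf.toReal (Iio Tinf.toReal)) atTop)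
    (T : ℝ) (hT : 0 ≤ T) (hTlt : ENNReal.ofReal T < Tinf)
    (u : ℝ → ℝ) (hu_cont : ContinuousOn u (Icc 0 T))
    (hu_sub : ∀ t ∈ Icc (0:ℝ) T,
      u t ≤ z t + ∫ s in (0:ℝ)..t, α * (t - s) ^ (α - 1) * b s (u s)) :
    ∀ t ∈ Icc (0:ℝ) T, u t ≤ y t :=
  volterra_comparison_general α hα z b hb_cont hb_mono hb_lip Tinf y hy_cont hy_sol T hT hTlt u
    hu_cont hu_sub
end
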